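/- arXiv:math/0612463 — 2 statements merged into one kernel-verified Lean document; each statement's English description precedes it below -/
import Mathlib

section
/- Let σ be a totally mixed strategy profile of a finite extensive-form game, ν a non-leaf node, j a player, and s̃_j, t̃_j pure strategies of j in the subgame rooted at ν. Extend s̃_j and t̃_j to pure strategies s_j, t_j of the full game that agree with each other outside the subtree below ν and that choose, at every ancestor of ν where j acts, the edge leading toward ν. If u_j(s_j, σ_{−j}) = u_j(t_j, σ_{−j}), then u_j(s̃_j, σ̃_{−j}) = u_j(t̃_j, σ̃_{−j}), where σ̃ is the profile induced by σ on the subgame. -/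
/-- A finite extensive-form game tree: leaves carry payoff vectors, chance
nodes carry edge weights, player nodes carry the acting player's label. -/
inductive GameTree (N : ℕ) : Type
  | leaf (payoff : Fin N → ℝ)
  | chance (n : ℕ) (wt : Fin n → ℝ) (children : Fin n → GameTree N)
  | node (player : Fin N) (n : ℕ) (children : Fin n → GameTree N)

namespace GameTree

variable {N : ℕ}

/-- A behavioral strategy profile: at each node address, a probability for
each child index. -/
abbrev Profile := List ℕ → ℕ → ℝ

/-- Chance weights are positive and sum to 1; all branching is nonempty. -/
def ValidWeights : GameTree N → Prop
  | leaf _ => True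
  | chance n wt cs => 0 < n ∧ (∀ k, 0 < wt k) ∧ (∑ k, wt k) = 1 ∧ ∀ k, (cs k).ValidWeights
  | node _ n cs => 0 < n ∧ ∀ k, (cs k).ValidWeights

/-- The subtree at a given address (list of child indices), if any. -/
def nodeAt : GameTree N → List ℕ → Option (GameTree N)
  | t, [] => some t
  | leaf _, _ :: _ => none
  | chance n _ cs, k :: r => if h : k < n then (cs ⟨k, h⟩).nodeAt r else none
  | node _ n cs, k :: r => if h : k < n then (cs ⟨k, h⟩).nodeAt r else none

/-- The player acting at a given address, if any. -/
def actor (t : GameTree N) (p : List ℕ) : Option (Fin N) :=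
  match t.nodeAt p with
  | some (node i _ _) => some i
  | _ => none

/-- Probability, under profile `σ`, of the path descending from the current
subtree along the given child indices; `p` is the address of the current
subtree in the whole tree. -/
noncomputable def pathProb (σ : Profile) : GameTree N → List ℕ → List ℕ → ℝ
  | _, _, [] => 1
  | leaf _, _, _ :: _ => 0
  | chance n wt cs, p, k :: r =>
      if h : k < n then wt ⟨k, h⟩ * pathProb σ (cs ⟨k, h⟩) (p ++ [k]) r else 0
  | node _ n cs, p, k :: r =>
      if h : k < n then σ p k * pathProb σ (cs ⟨k, h⟩) (p ++ [k]) r else 0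

/-- The list of addresses of all leaves of the tree. -/
def leaves : GameTree N → List (List ℕ)
  | leaf _ => [[]]
  | chance n _ cs => (List.finRange n).flatMap fun k => ((cs k).leaves).map (k.val :: ·)
  | node _ n cs => (List.finRange n).flatMap fun k => ((cs k).leaves).map (k.val :: ·)

/-- Payoff to player `i` at the leaf with the given address (0 if invalid). -/
noncomputable def payoffAt : GameTree N → List ℕ → Fin N → ℝ
  | leaf u, [], i => u i
  | chance n _ cs, k :: r, i => if h : k < n then (cs ⟨k, h⟩).payoffAt r i else 0
  | node _ n cs, k :: r, i => if h : k < n then (cs ⟨k, h⟩).payoffAt r i else 0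
  | _, _, _ => 0

/-- Expected utility of player `i` under profile `σ`:
`u_i(σ) = Σ_λ u_i(λ) Pr[λ|σ]`. -/
noncomputable def util (σ : Profile) (t : GameTree N) (i : Fin N) : ℝ :=
  (t.leaves.map fun l => t.payoffAt l i * pathProb σ t [] l).sum

/-- The profile induced on the subgame rooted at address `ν`. -/
def induced (σ : Profile) (ν : List ℕ) : Profile := fun p => σ (ν ++ p)

/-- The behavioral profile corresponding to a pure strategy profile. -/
def pureProfile (s : List ℕ → ℕ) : Profile := fun p k => if s p = k then 1 else 0

/-- A pure strategy profile selects an actual outgoing edge at each player node. -/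
def ValidPure (t : GameTree N) (s : List ℕ → ℕ) : Prop :=
  ∀ p i m cs, t.nodeAt p = some (node i m cs) → s p < m

/-- A behavioral profile is a genuine probability assignment at each player node. -/
def ValidProfile (t : GameTree N) (σ : Profile) : Prop :=
  ∀ p i m cs, t.nodeAt p = some (node i m cs) →
    (∀ k < m, 0 ≤ σ p k) ∧ (∑ k ∈ Finset.range m, σ p k) = 1

/-- A totally mixed behavioral profile: every edge at every player node gets
strictly positive probability. -/
def TotallyMixed (t : GameTree N) (σ : Profile) : Prop :=
  ∀ p i m cs, t.nodeAt p = some (node i m cs) →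
    (∀ k < m, 0 < σ p k) ∧ (∑ k ∈ Finset.range m, σ p k) = 1

/-- The profile where player `j` deviates from `σ` to the pure strategy `s`. -/
def dev (t : GameTree N) (σ : Profile) (j : Fin N) (s : List ℕ → ℕ) : Profile :=
  fun p k => if t.actor p = some j then pureProfile s p k else σ p k

/-- Nash equilibrium: no player can improve by a unilateral pure deviation. -/
def IsNash (t : GameTree N) (σ : Profile) : Prop :=
  ∀ j : Fin N, ∀ s : List ℕ → ℕ, ValidPure t s → util (dev t σ j s) t j ≤ util σ t j

/-- Subgame perfection: the induced profile is a Nash equilibrium of every subgame. -/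
def IsSubgamePerfect (t : GameTree N) (σ : Profile) : Prop :=
  ∀ ν t', t.nodeAt ν = some t' → IsNash t' (induced σ ν)

/-- Every player is indifferent among all of their pure strategies. -/
def Indifferent (t : GameTree N) (σ : Profile) : Prop :=
  ∀ j : Fin N, ∀ s₁ s₂ : List ℕ → ℕ, ValidPure t s₁ → ValidPure t s₂ →
    util (dev t σ j s₁) t j = util (dev t σ j s₂) t j

/-- Player `j` is indifferent among all of `j`'s pure strategies. -/
def IndifferentFor (t : GameTree N) (σ : Profile) (j : Fin N) : Prop :=
  ∀ s₁ s₂ : List ℕ → ℕ, ValidPure t s₁ → ValidPure t s₂ →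
    util (dev t σ j s₁) t j = util (dev t σ j s₂) t j

end GameTree

section Aux
namespace GameTree

variable {N : ℕ}

lemma nodeAt_append (a : List ℕ) : ∀ (b : List ℕ) (t : GameTree N),
    t.nodeAt (a ++ b) = (t.nodeAt a).bind (fun u => u.nodeAt b) := by
  induction a with
  | nil => intro b t; simp [nodeAt]
  | cons k a ih =>
    intro b t
    cases t with
    | leaf u => simp [nodeAt]
    | chance n wt cs =>
      simp only [List.cons_append, nodeAt]
      split
      · exact ih b _
      · simp
    | node i n cs =>
      simp only [List.cons_append, nodeAt]
      split
      · exact ih b _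
      · simp

lemma actor_append {t t' : GameTree N} {ν : List ℕ} (h : t.nodeAt ν = some t')
    (q : List ℕ) : t.actor (ν ++ q) = t'.actor q := by
  unfold actor
  rw [nodeAt_append, h]
  rfl

/-- pathProb only depends on the profile's values below the base address. -/
lemma pathProb_congr (τ τ' : Profile) :
    ∀ (u : GameTree N) (p p' r : List ℕ),
      (∀ q k, τ (p ++ q) k = τ' (p' ++ q) k) →
      pathProb τ u p r = pathProb τ' u p' r := by
  intro u
  induction u with
  | leaf u => intro p p' r h; cases r <;> simp [pathProb]
  | chance n wt cs ih =>
    intro p p' r h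
    cases r with
    | nil => simp [pathProb]
    | cons k r' =>
      simp only [pathProb]
      split
      · congr 1
        apply ih
        intro q k'
        have := h (k :: q) k'
        simpa [List.append_assoc] using this
      · rfl
  | node i n cs ih =>
    intro p p' r h
    cases r with
    | nil => simp [pathProb]
    | cons k r' =>
      simp only [pathProb]
      split
      · have h0 := h [] k
        simp only [List.append_nil] at h0
        rw [h0]
        congr 1
        apply ih
        intro q k'
        have := h (k :: q) k'
        simpa [List.append_assoc] using this
      · rfl

/-- Partial expected-utility sum, with explicit base address. -/
noncomputable def Usum (τ : Profile) (u : GameTree N) (j : Fin N) (p0 : List ℕ) : ℝ :=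
  (u.leaves.map fun l => u.payoffAt l j * pathProb τ u p0 l).sum

lemma util_eq_Usum (τ : Profile) (u : GameTree N) (j : Fin N) :
    util τ u j = Usum τ u j [] := rfl

lemma Usum_congr {τ τ' : Profile} (u : GameTree N) (j : Fin N) {p p' : List ℕ}
    (h : ∀ q k, τ (p ++ q) k = τ' (p' ++ q) k) :
    Usum τ u j p = Usum τ' u j p' := by
  unfold Usum
  congr 1
  apply List.map_congr_left
  intro l _
  rw [pathProb_congr τ τ' u p p' l h]

lemma Usum_node (τ : Profile) (i : Fin N) (n : ℕ) (cs : Fin n → GameTree N)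
    (j : Fin N) (p0 : List ℕ) :
    Usum τ (node i n cs) j p0
      = ∑ k : Fin n, τ p0 k.val * Usum τ (cs k) j (p0 ++ [k.val]) := by
  unfold Usum
  rw [Fin.sum_univ_def]
  simp only [leaves, List.flatMap_def, List.map_flatten, List.map_map, List.sum_flatten,
    List.map_map]
  congr 1
  apply List.map_congr_left
  intro k _
  simp only [Function.comp_apply, Function.comp_def, List.map_map]
  rw [← List.sum_map_mul_left]
  congr 1
  apply List.map_congr_left
  intro l _
  simp only [Function.comp_apply, payoffAt, pathProb, k.isLt, dif_pos, Fin.eta]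
  ring

lemma Usum_chance (τ : Profile) (n : ℕ) (wt : Fin n → ℝ) (cs : Fin n → GameTree N)
    (j : Fin N) (p0 : List ℕ) :
    Usum τ (chance n wt cs) j p0
      = ∑ k : Fin n, wt k * Usum τ (cs k) j (p0 ++ [k.val]) := by
  unfold Usum
  rw [Fin.sum_univ_def]
  simp only [leaves, List.flatMap_def, List.map_flatten, List.map_map, List.sum_flatten,
    List.map_map]
  congr 1
  apply List.map_congr_left
  intro k _
  simp only [Function.comp_apply, Function.comp_def, List.map_map]
  rw [← List.sum_map_mul_left]
  congr 1
  apply List.map_congr_left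
  intro l _
  simp only [Function.comp_apply, payoffAt, pathProb, k.isLt, dif_pos, Fin.eta]
  ring

/-- Key decomposition: the difference of utilities of two profiles agreeing outside
the subtree below `ν` factors through the probability of reaching `ν`. -/
lemma Usum_sub (j : Fin N) :
    ∀ (ν : List ℕ) (t t' : GameTree N), t.nodeAt ν = some t' →
    ∀ (τ τ' : Profile) (p0 : List ℕ),
      (∀ q k, ¬ ν.IsPrefix q → τ (p0 ++ q) k = τ' (p0 ++ q) k) →
      Usum τ t j p0 - Usum τ' t j p0
        = pathProb τ t p0 ν * (Usum τ t' j (p0 ++ ν) - Usum τ' t' j (p0 ++ ν)) := by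
  intro ν
  induction ν with
  | nil =>
    intro t t' h τ τ' p0 _
    simp only [nodeAt, Option.some.injEq] at h
    subst h
    simp [pathProb]
  | cons k r ih =>
    intro t t' h τ τ' p0 H1
    have hτ0 : ∀ k', τ p0 k' = τ' p0 k' := by
      intro k'
      have := H1 [] k' (by simp)
      simpa using this
    cases t with
    | leaf u => simp [nodeAt] at h
    | chance n wt cs =>
      simp only [nodeAt] at h
      split at h
      case isFalse => exact absurd h (by simp)
      case isTrue hk =>
        rw [Usum_chance, Usum_chance]
        rw [← Finset.sum_sub_distrib]
        have hbranch : ∀ k' : Fin n, k' ≠ ⟨k, hk⟩ →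
            wt k' * Usum τ (cs k') j (p0 ++ [k'.val])
              - wt k' * Usum τ' (cs k') j (p0 ++ [k'.val]) = 0 := by
          intro k' hne
          have : Usum τ (cs k') j (p0 ++ [k'.val]) = Usum τ' (cs k') j (p0 ++ [k'.val]) := by
            apply Usum_congr
            intro q m
            have he : p0 ++ [k'.val] ++ q = p0 ++ (k'.val :: q) := by simp
            rw [he]
            apply H1 (k'.val :: q) m
            intro hpre
            rcases List.cons_prefix_cons.mp hpre with ⟨hh, _⟩
            exact hne (Fin.ext hh.symm)
          rw [this]; ring
        rw [Finset.sum_eq_single ⟨k, hk⟩ (fun k' _ hne => hbranch k' hne) (by simp)]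
        have hrec := ih (cs ⟨k, hk⟩) t' h τ τ' (p0 ++ [k])
          (by
            intro q m hq
            have : (p0 ++ [k]) ++ q = p0 ++ (k :: q) := by simp
            rw [this]
            apply H1
            intro hpre
            exact hq (List.cons_prefix_cons.mp hpre).2)
        simp only [pathProb, hk, dif_pos, Fin.val_mk]
        have hassoc : (p0 ++ [k]) ++ r = p0 ++ (k :: r) := by simp
        rw [hassoc] at hrec
        linear_combination (wt ⟨k, hk⟩) * hrec
    | node i n cs =>
      simp only [nodeAt] at h
      split at h
      case isFalse => exact absurd h (by simp)
      case isTrue hk =>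
        rw [Usum_node, Usum_node]
        rw [← Finset.sum_sub_distrib]
        have hbranch : ∀ k' : Fin n, k' ≠ ⟨k, hk⟩ →
            τ p0 k'.val * Usum τ (cs k') j (p0 ++ [k'.val])
              - τ' p0 k'.val * Usum τ' (cs k') j (p0 ++ [k'.val]) = 0 := by
          intro k' hne
          have h2 : Usum τ (cs k') j (p0 ++ [k'.val]) = Usum τ' (cs k') j (p0 ++ [k'.val]) := by
            apply Usum_congr
            intro q m
            have he : p0 ++ [k'.val] ++ q = p0 ++ (k'.val :: q) := by simp
            rw [he]
            apply H1 (k'.val :: q) m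
            intro hpre
            rcases List.cons_prefix_cons.mp hpre with ⟨hh, _⟩
            exact hne (Fin.ext hh.symm)
          rw [h2, hτ0]; ring
        rw [Finset.sum_eq_single ⟨k, hk⟩ (fun k' _ hne => hbranch k' hne) (by simp)]
        have hrec := ih (cs ⟨k, hk⟩) t' h τ τ' (p0 ++ [k])
          (by
            intro q m hq
            have : (p0 ++ [k]) ++ q = p0 ++ (k :: q) := by simp
            rw [this]
            apply H1
            intro hpre
            exact hq (List.cons_prefix_cons.mp hpre).2)
        simp only [pathProb, hk, dif_pos, Fin.val_mk]
        have hassoc : (p0 ++ [k]) ++ r = p0 ++ (k :: r) := by simp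
        rw [hassoc] at hrec
        linear_combination (τ p0 k) * hrec + Usum τ' (cs ⟨k, hk⟩) j (p0 ++ [k]) * hτ0 k

/-- Positivity of the probability of reaching `ν`. -/
lemma pathProb_pos (τ : Profile) :
    ∀ (ν : List ℕ) (t t' : GameTree N), t.ValidWeights → t.nodeAt ν = some t' →
    ∀ (p0 : List ℕ),
      (∀ q k r i m cs, ν = q ++ k :: r → t.nodeAt q = some (node i m cs) →
        0 < τ (p0 ++ q) k) →
      0 < pathProb τ t p0 ν := by
  intro ν
  induction ν with
  | nil => intro t t' _ _ p0 _; simp [pathProb]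
  | cons k r ih =>
    intro t t' hw h p0 hpos
    cases t with
    | leaf u => simp [nodeAt] at h
    | chance n wt cs =>
      simp only [nodeAt] at h
      split at h
      case isFalse => exact absurd h (by simp)
      case isTrue hk =>
        simp only [pathProb, hk, dif_pos]
        apply mul_pos (hw.2.1 _)
        apply ih (cs ⟨k, hk⟩) t' (hw.2.2.2 _) h
        intro q m r' i' m' cs' hqe hq
        have h2 := hpos (k :: q) m r' i' m' cs' (by simp [hqe]) (by
          simpa [nodeAt, hk] using hq)
        simpa [List.append_assoc] using h2
    | node i n cs =>
      simp only [nodeAt] at h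
      split at h
      case isFalse => exact absurd h (by simp)
      case isTrue hk =>
        simp only [pathProb, hk, dif_pos]
        apply mul_pos
        · have := hpos [] k r i n cs rfl (by simp [nodeAt])
          simpa using this
        · apply ih (cs ⟨k, hk⟩) t' (hw.2 _) h
          intro q m r' i' m' cs' hqe hq
          have h2 := hpos (k :: q) m r' i' m' cs' (by simp [hqe]) (by
            simpa [nodeAt, hk] using hq)
          simpa [List.append_assoc] using h2

end GameTree
end Aux


open GameTree in
/-- if two extensions `s`, `t₁` of subgame pure strategies of player `j`
agree outside the subtree below `ν` and lead toward `ν` at every ancestor of `ν`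
where `j` acts, and they give `j` equal expected utility against the totally mixed
profile `σ`, then the induced subgame strategies give `j` equal expected utility
against the induced subgame profile. -/
theorem subgame_indifference_of_indifference {N : ℕ} (t : GameTree N)
    (hw : t.ValidWeights) (σ : GameTree.Profile) (hm : TotallyMixed t σ)
    (ν : List ℕ) (t' : GameTree N) (hν : t.nodeAt ν = some t')
    (hnl : ∀ u, t' ≠ GameTree.leaf u) (j : Fin N) (s t₁ : List ℕ → ℕ)
    (hvs : ValidPure t s) (hvt : ValidPure t t₁)
    (hout : ∀ p, ¬ ν.IsPrefix p → s p = t₁ p)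
    (htoward : ∀ q k r, ν = q ++ k :: r → t.actor q = some j → s q = k ∧ t₁ q = k)
    (h : util (dev t σ j s) t j = util (dev t σ j t₁) t j) :
    util (dev t' (induced σ ν) j fun p => s (ν ++ p)) t' j
      = util (dev t' (induced σ ν) j fun p => t₁ (ν ++ p)) t' j := by
  classical
  set τs := dev t σ j s with hτs
  set τt := dev t σ j t₁ with hτt
  -- the two full-game deviation profiles agree off the subtree below ν
  have H1 : ∀ q k, ¬ ν.IsPrefix q → τs ([] ++ q) k = τt ([] ++ q) k := by
    intro q k hq
    simp only [List.nil_append, hτs, hτt, dev]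
    split
    · simp [pureProfile, hout q hq]
    · rfl
  have hdec := Usum_sub j ν t t' hν τs τt [] H1
  rw [← util_eq_Usum, ← util_eq_Usum, h, sub_self, List.nil_append] at hdec
  -- positivity of the probability of reaching ν
  have hR : 0 < pathProb τs t [] ν := by
    apply pathProb_pos τs ν t t' hw hν
    intro q k r i m cs hqe hq
    have hkm : k < m := by
      have := hν
      rw [hqe, nodeAt_append, hq] at this
      simp only [Option.bind_some, nodeAt] at this
      by_contra hkm
      rw [dif_neg hkm] at this
      exact absurd this (by simp)
    have hact : t.actor q = some i := by unfold actor; rw [hq]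
    simp only [List.nil_append, hτs, dev]
    by_cases hij : i = j
    · rw [hij] at hact
      rw [if_pos hact]
      have := (htoward q k r hqe hact).1
      simp [pureProfile, this]
    · rw [if_neg (fun hc => hij (by rw [hact] at hc; exact Option.some.inj hc))]
      exact ((hm q i m cs hq).1 k hkm)
  -- so the subgame partial sums are equal
  have hsub : Usum τs t' j ν = Usum τt t' j ν := by
    have := hdec.symm
    rcases mul_eq_zero.mp this with h0 | h0
    · exact absurd h0 (ne_of_gt hR)
    · linarith [h0]
  -- transport to the induced subgame profiles
  have htr1 : util (dev t' (induced σ ν) j fun p => s (ν ++ p)) t' j = Usum τs t' j ν := by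
    rw [util_eq_Usum]
    apply Usum_congr
    intro q k
    simp only [List.nil_append, hτs, dev, actor_append hν q, induced, pureProfile]
  have htr2 : util (dev t' (induced σ ν) j fun p => t₁ (ν ++ p)) t' j = Usum τt t' j ν := by
    rw [util_eq_Usum]
    apply Usum_congr
    intro q k
    simp only [List.nil_append, hτt, dev, actor_append hν q, induced, pureProfile]
  rw [htr1, htr2, hsub]
end

section
/- In a finite extensive-form game, let ν be a non-leaf node at which player j acts, and suppose in a totally mixed profile σ player j is indifferent among all pure strategies of the subgame below each child subtree where j acts later; if additionally j is indifferent among the immediate actions at ν (fixing reference actions below), then j is indifferent among all pure strategies in the subgame rooted at ν. -/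
namespace GameTree

variable {N : ℕ}

theorem pathProb_shift (σ : Profile) (t : GameTree N) (l : List ℕ) :
    ∀ p q : List ℕ, pathProb σ t (p ++ q) l = pathProb (induced σ p) t q l := by
  induction l generalizing t with
  | nil => intro p q; simp [pathProb]
  | cons k r ih =>
    intro p q
    cases t with
    | leaf _ => simp [pathProb]
    | chance n wt cs =>
      simp only [pathProb]
      split
      · rw [List.append_assoc, ih]
      · rfl
    | node pl n cs =>
      simp only [pathProb]
      split
      · rw [List.append_assoc, ih]; rfl
      · rfl

theorem util_node (τ : Profile) (i : Fin N) (pl : Fin N) (n : ℕ)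
    (cs : Fin n → GameTree N) :
    util τ (node pl n cs) i =
      ∑ k : Fin n, τ [] k.val * util (induced τ [k.val]) (cs k) i := by
  rw [util, leaves, Fin.sum_univ_def, List.map_flatMap, List.flatMap, List.sum_flatten,
    List.map_map]
  congr 1
  refine List.map_congr_left fun k _ => ?_
  simp only [Function.comp, List.map_map]
  rw [util, ← List.sum_map_mul_left]
  congr 1
  refine List.map_congr_left fun l _ => ?_
  simp only [Function.comp]
  have hk : k.val < n := k.isLt
  simp only [payoffAt, pathProb, hk, dif_pos, Fin.eta]
  have := pathProb_shift τ (cs k) l [k.val] []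
  simp only [List.append_nil] at this
  rw [show ([] : List ℕ) ++ [k.val] = [k.val] from rfl, this]
  ring

theorem actor_node_cons (pl : Fin N) (n : ℕ) (cs : Fin n → GameTree N)
    (k : Fin n) (p : List ℕ) :
    (node pl n cs).actor (k.val :: p) = (cs k).actor p := by
  simp [actor, nodeAt, k.isLt, Fin.eta]

theorem induced_dev_node (pl : Fin N) (n : ℕ) (cs : Fin n → GameTree N)
    (σ : Profile) (j : Fin N) (s : List ℕ → ℕ) (k : Fin n) :
    induced (dev (node pl n cs) σ j s) [k.val] =
      dev (cs k) (induced σ [k.val]) j (fun r => s (k.val :: r)) := by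
  funext p k'
  simp only [induced, dev, pureProfile, List.cons_append, List.nil_append,
    actor_node_cons]

theorem validPure_restrict (pl : Fin N) (n : ℕ) (cs : Fin n → GameTree N)
    (s : List ℕ → ℕ) (hs : ValidPure (node pl n cs) s) (k : Fin n) :
    ValidPure (cs k) (fun r => s (k.val :: r)) := by
  intro p i m' cs' hp
  refine hs (k.val :: p) i m' cs' ?_
  simpa [nodeAt, k.isLt, Fin.eta] using hp

theorem util_dev_node (pl : Fin N) (n : ℕ) (cs : Fin n → GameTree N)
    (σ : Profile) (j : Fin N) (s : List ℕ → ℕ) (hs : s [] < n) :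
    util (dev (node j n cs) σ j s) (node j n cs) j =
      util (dev (cs ⟨s [], hs⟩) (induced σ [s []]) j
        (fun r => s (s [] :: r))) (cs ⟨s [], hs⟩) j := by
  rw [util_node]
  have hact : (node j n cs).actor [] = some j := by simp [actor, nodeAt]
  have hroot : ∀ k : Fin n, dev (node j n cs) σ j s [] k.val =
      if s [] = k.val then 1 else 0 := by
    intro k; simp [dev, hact, pureProfile]
  rw [Finset.sum_eq_single (⟨s [], hs⟩ : Fin n)]
  · rw [hroot, if_pos rfl, one_mul, induced_dev_node]
  · intro b _ hb
    rw [hroot, if_neg, zero_mul]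
    intro h
    exact hb (Fin.ext h.symm)
  · intro h; exact absurd (Finset.mem_univ _) h

end GameTree

open GameTree in
/-- inductive step: let player `j` act at the root of `t'` with `m`
children.  Suppose `j` is indifferent among all pure strategies in each child
subgame (under the induced profile), and `j` is indifferent among the immediate
actions at the root, each combined below with the fixed distinguished choices `e`.
Then `j` is indifferent among all pure strategies of the subgame `t'`. -/
theorem indifferent_of_children_and_immediate {N : ℕ} (m : ℕ) (j : Fin N)
    (cs : Fin m → GameTree N) (t' : GameTree N) (ht : t' = GameTree.node j m cs)
    (σ : GameTree.Profile) (hw : t'.ValidWeights) (hm : TotallyMixed t' σ)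
    (e : List ℕ → ℕ) (he : ValidPure t' e)
    (hchild : ∀ k : Fin m, IndifferentFor (cs k) (induced σ [k.val]) j)
    (himm : ∀ k, k < m →
      util (dev t' σ j fun p => if p = [] then k else e p) t' j =
      util (dev t' σ j fun p => if p = [] then e [] else e p) t' j) :
    IndifferentFor t' σ j := by

  subst ht
  intro s₁ s₂ h1 h2
  have hroot : (GameTree.node j m cs).nodeAt [] = some (GameTree.node j m cs) := rfl
  have hs1 : s₁ [] < m := h1 [] j m cs hroot
  have hs2 : s₂ [] < m := h2 [] j m cs hroot
  have hee : e [] < m := he [] j m cs hroot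
  -- value of playing e below child k
  set v : Fin m → ℝ := fun k =>
    util (dev (cs k) (induced σ [k.val]) j fun r => e (k.val :: r)) (cs k) j with hv
  have hvall : ∀ k : Fin m, v k = v ⟨e [], hee⟩ := by
    intro k
    have h := himm k.val k.isLt
    rw [util_dev_node j m cs σ j _ (by simpa using k.isLt),
        util_dev_node j m cs σ j _ (by simpa using hee)] at h
    simpa [hv] using h
  have key : ∀ (s : List ℕ → ℕ) (hval : ValidPure (GameTree.node j m cs) s)
      (hs : s [] < m),
      util (dev (GameTree.node j m cs) σ j s) (GameTree.node j m cs) j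
        = v ⟨s [], hs⟩ := by
    intro s hval hs
    rw [util_dev_node j m cs σ j s hs, hv]
    exact hchild ⟨s [], hs⟩ _ _ (validPure_restrict j m cs s hval ⟨s [], hs⟩)
      (validPure_restrict j m cs e he ⟨s [], hs⟩)
  rw [key s₁ h1 hs1, key s₂ h2 hs2, hvall ⟨s₁ [], hs1⟩, hvall ⟨s₂ [], hs2⟩]
end
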